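/- Let M ≥ 2, let X_1, …, X_M be finite nonempty types, C a finite nonempty label type, and let P be a pmf on X_1 × ⋯ × X_M with P(x) > 0 for all x. Then for any classifiers h = (h^1, …, h^M) with h^m : X_m → Δ_C and prior p ∈ Δ_C with p_c > 0 for all c, if eTCg(h, p) = TC(P) (i.e., (h, p) attains the maximum possible value of the expected total correlation gain), then S_{h,p}(x) = R(x) for every x ∈ X_1 × ⋯ × X_M, where R(x) := P(x)/∏_{m=1}^M P_m(x_m) is the joint-marginal ratio. -/
import Mathlib


/-- The `m`-th marginal of a pmf `P` on `X_1 × ⋯ × X_M`: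
`P_m(x_m) := ∑_{x' : x'_m = x_m} P(x')`. -/
noncomputable def marginal {M : ℕ} {X : Fin M → Type*} [∀ m, Fintype (X m)]
    [∀ m, DecidableEq (X m)] (P : (∀ m, X m) → ℝ) (m : Fin M) (xm : X m) : ℝ :=
  ∑ x' : ∀ m', X m', if x' m = xm then P x' else 0

/-- The joint-marginal ratio `R(x) := P(x) / ∏_m P_m(x_m)`. -/
noncomputable def jmRatio {M : ℕ} {X : Fin M → Type*} [∀ m, Fintype (X m)]
    [∀ m, DecidableEq (X m)] (P : (∀ m, X m) → ℝ) (x : ∀ m, X m) : ℝ :=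
  P x / ∏ m, marginal P m (x m)

/-- The total correlation `TC(P) := ∑_x P(x)·log R(x)`. -/
noncomputable def totalCorrelation {M : ℕ} {X : Fin M → Type*} [∀ m, Fintype (X m)]
    [∀ m, DecidableEq (X m)] (P : (∀ m, X m) → ℝ) : ℝ :=
  ∑ x : ∀ m, X m, P x * Real.log (jmRatio P x)

/-- The aggregated score `S_{h,p}(x) := ∑_c (∏_m h^m(x_m)_c) / (p_c)^{M−1}`. -/
noncomputable def score {M : ℕ} {X : Fin M → Type*} {C : Type*} [Fintype C]
    (h : ∀ m, X m → C → ℝ) (p : C → ℝ) (x : ∀ m, X m) : ℝ :=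
  ∑ c, (∏ m, h m (x m) c) / (p c) ^ (M - 1)

/-- Extended-real logarithm with the convention `log 0 = −∞`. -/
noncomputable def elog (t : ℝ) : EReal := if t = 0 then ⊥ else ((Real.log t : ℝ) : EReal)

/-- The expected total correlation gain
`eTCg(h, p) := 1 + ∑_x P(x)·log S_{h,p}(x) − ∑_x (∏_m P_m(x_m))·S_{h,p}(x)`,
as an extended real, with the convention that the middle sum is `−∞` whenever
`S_{h,p}(x) = 0` for some `x` (here `P(x) > 0` for all `x`). -/
noncomputable def eTCgE {M : ℕ} {X : Fin M → Type*} {C : Type*} [∀ m, Fintype (X m)]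
    [∀ m, DecidableEq (X m)] [Fintype C]
    (P : (∀ m, X m) → ℝ) (h : ∀ m, X m → C → ℝ) (p : C → ℝ) : EReal :=
  1 + (∑ x : ∀ m, X m, (P x : EReal) * elog (score h p x)) -
    ((∑ x : ∀ m, X m, (∏ m, marginal P m (x m)) * score h p x : ℝ) : EReal)

lemma ereal_coe_sum {ι : Type*} (s : Finset ι) (f : ι → ℝ) :
    ((∑ i ∈ s, f i : ℝ) : EReal) = ∑ i ∈ s, ((f i : ℝ) : EReal) :=
  map_sum (⟨⟨Real.toEReal, EReal.coe_zero⟩, EReal.coe_add⟩ : ℝ →+ EReal) f s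

lemma gibbs_nonneg {a b : ℝ} (ha : 0 < a) (hb : 0 < b) :
    0 ≤ a * Real.log (a / b) + b - a := by
  have h := Real.log_le_sub_one_of_pos (div_pos hb ha)
  have hlog : Real.log (a / b) = - Real.log (b / a) := by
    rw [← Real.log_inv, inv_div]
  have hc : a * (b / a) = b := mul_div_cancel₀ b ha.ne'
  nlinarith

lemma gibbs_eq {a b : ℝ} (ha : 0 < a) (hb : 0 < b)
    (h : a * Real.log (a / b) + b - a = 0) : a = b := by
  by_contra hne
  have hba : b / a ≠ 1 := by
    intro h1
    exact hne ((div_eq_one_iff_eq ha.ne').1 h1).symm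
  have h2 := Real.log_lt_sub_one_of_pos (div_pos hb ha) hba
  have hlog : Real.log (a / b) = - Real.log (b / a) := by
    rw [← Real.log_inv, inv_div]
  have hc : a * (b / a) = b := mul_div_cancel₀ b ha.ne'
  nlinarith

/-- if classifiers `h` and a strictly positive prior `p` attain the maximum
possible value of the expected total correlation gain, `eTCg(h, p) = TC(P)`, then the
aggregated score coincides with the joint-marginal ratio: `S_{h,p}(x) = R(x)` for all `x`. -/
theorem eTCg_maximizer_score_eq_jmRatio {M : ℕ} (hM : 2 ≤ M)
    (X : Fin M → Type*) [∀ m, Fintype (X m)] [∀ m, Nonempty (X m)] [∀ m, DecidableEq (X m)]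
    (C : Type*) [Fintype C] [Nonempty C]
    (P : (∀ m, X m) → ℝ) (hP0 : ∀ x, 0 < P x) (hP1 : ∑ x, P x = 1)
    (h : ∀ m, X m → C → ℝ)
    (hh : ∀ m (xm : X m), (∀ c, 0 ≤ h m xm c) ∧ ∑ c, h m xm c = 1)
    (p : C → ℝ) (hp0 : ∀ c, 0 < p c) (hp1 : ∑ c, p c = 1)
    (hmax : eTCgE P h p = ((totalCorrelation P : ℝ) : EReal)) :
    ∀ x : ∀ m, X m, score h p x = jmRatio P x := by
  classical
  set S : (∀ m, X m) → ℝ := score h p with hSdef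
  set Q : (∀ m, X m) → ℝ := fun x => ∏ m, marginal P m (x m) with hQdef
  -- marginals are positive
  have hmarg_pos : ∀ m (xm : X m), 0 < marginal P m xm := by
    intro m xm
    have hx0 : ∀ m', Nonempty (X m') := inferInstance
    refine Finset.sum_pos' (fun x' _ => ?_) ?_
    · split <;> [exact (hP0 _).le; rfl]
    · refine ⟨Function.update (fun m' => Classical.arbitrary (X m')) m xm,
        Finset.mem_univ _, ?_⟩
      rw [if_pos (Function.update_self m xm _)]
      exact hP0 _
  have hQpos : ∀ x, 0 < Q x := fun x =>
    Finset.prod_pos (fun m _ => hmarg_pos m (x m))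
  -- sum of the product of marginals is 1
  have hQ1 : ∑ x, Q x = 1 := by
    have hmarg1 : ∀ m, ∑ xm, marginal P m xm = 1 := by
      intro m
      unfold marginal
      rw [Finset.sum_comm]
      simp only [Finset.sum_ite_eq, Finset.mem_univ, if_true]
      exact hP1
    rw [hQdef, ← Fintype.prod_sum]
    simp [hmarg1]
  -- score is nonnegative
  have hS_nonneg : ∀ x, 0 ≤ S x := by
    intro x
    refine Finset.sum_nonneg fun c _ => div_nonneg ?_ (pow_nonneg (hp0 c).le _)
    exact Finset.prod_nonneg fun m _ => (hh m (x m)).1 c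
  -- score is positive (else eTCgE = ⊥)
  have hS_pos : ∀ x, 0 < S x := by
    intro x
    rcases (hS_nonneg x).lt_or_eq with h' | h'
    · exact h'
    · exfalso
      have h1 : (P x : EReal) * elog (S x) = ⊥ := by
        rw [elog, if_pos h'.symm]
        exact EReal.coe_mul_bot_of_pos (hP0 x)
      have h2 : (∑ y : ∀ m, X m, (P y : EReal) * elog (S y)) = ⊥ := by
        rw [← Finset.add_sum_erase _ _ (Finset.mem_univ x), h1, EReal.bot_add]
      have hbot : eTCgE P h p = ⊥ := by
        rw [eTCgE]
        rw [show (∑ y : ∀ m, X m, (P y : EReal) * elog (score h p y)) = ⊥ from h2]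
        rw [EReal.add_bot, EReal.bot_sub]
      exact EReal.coe_ne_bot _ (hmax.symm.trans hbot)
  -- eTCgE is the coercion of a real number
  have hmid : (∑ x : ∀ m, X m, (P x : EReal) * elog (score h p x))
      = ((∑ x : ∀ m, X m, P x * Real.log (S x) : ℝ) : EReal) := by
    rw [ereal_coe_sum]
    refine Finset.sum_congr rfl fun x _ => ?_
    rw [elog, if_neg (hS_pos x).ne', ← EReal.coe_mul]
  have hreal : 1 + (∑ x, P x * Real.log (S x)) - (∑ x, Q x * S x)
      = totalCorrelation P := by
    have : eTCgE P h p = ((1 + (∑ x, P x * Real.log (S x)) - (∑ x, Q x * S x) : ℝ) : EReal) := by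
      rw [eTCgE, hmid]
      rw [EReal.coe_sub, EReal.coe_add, EReal.coe_one]
    exact EReal.coe_eq_coe_iff.1 (this.symm.trans hmax)
  -- the Gibbs-type sum is zero
  have key : ∑ x, (P x * Real.log (P x / (Q x * S x)) + Q x * S x - P x) = 0 := by
    have expand : ∀ x : ∀ m, X m, P x * Real.log (P x / (Q x * S x))
        = P x * Real.log (jmRatio P x) - P x * Real.log (S x) := by
      intro x
      have : P x / (Q x * S x) = (P x / Q x) / S x := by
        rw [div_div]
      rw [this, Real.log_div (div_pos (hP0 x) (hQpos x)).ne' (hS_pos x).ne', jmRatio]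
      ring
    calc ∑ x, (P x * Real.log (P x / (Q x * S x)) + Q x * S x - P x)
        = ∑ x, ((P x * Real.log (jmRatio P x) - P x * Real.log (S x)) + Q x * S x - P x) := by
          exact Finset.sum_congr rfl fun x _ => by rw [expand x]
      _ = (∑ x, P x * Real.log (jmRatio P x)) - (∑ x, P x * Real.log (S x))
            + (∑ x, Q x * S x) - (∑ x, P x) := by
          rw [← Finset.sum_sub_distrib, ← Finset.sum_add_distrib, ← Finset.sum_sub_distrib]
      _ = 0 := by
          rw [hP1]
          have := hreal
          unfold totalCorrelation at this
          linarith
  -- each term is zero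
  have hterm : ∀ x : ∀ m, X m,
      P x * Real.log (P x / (Q x * S x)) + Q x * S x - P x = 0 := by
    have := (Finset.sum_eq_zero_iff_of_nonneg
      (fun x _ => gibbs_nonneg (hP0 x) (mul_pos (hQpos x) (hS_pos x)))).1 key
    exact fun x => this x (Finset.mem_univ x)
  intro x
  have := gibbs_eq (hP0 x) (mul_pos (hQpos x) (hS_pos x)) (hterm x)
  have hQx := (hQpos x).ne'
  rw [jmRatio, eq_div_iff hQx]
  rw [hSdef] at this ⊢
  linarith [this, mul_comm (Q x) (score h p x)]
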